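/- arXiv:1403.4564 — 4 statements merged into one kernel-verified Lean document; each statement's English description precedes it below -/
import Mathlib

section
/- Let $V$ be the generator of a strongly continuous one-parameter group $e^{tV}$ of isometries on a Banach space $E$. Then for every $f \in \mathrm{Dom}(V^m)$, every integer $1 \le l < m$, and all $a, r > 0$, the interpolation inequality $r^l \|V^l f\| \le a^{m-l} r^m \|V^m f\| + c_m a^{-l} \|f\|$ holds, where $c_m$ is a constant depending only on $m$. -/
/-!
Taylor's formula for the orbit `t ↦ U t f = e^{tV} f`, combined with `‖U t f‖ = ‖f‖`, gives
`‖U T f - ∑_{j<m} T^j/j! • V^j f‖ ≤ T^m/m! ‖V^m f‖` for `T ≥ 0`. Since the Vandermonde matrix of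
the nodes `0, …, m-1` is invertible, there are coefficients `b_k` with `∑_k b_k k^j = δ_{jl}` for
`j < m`; the combination `∑_k b_k U(kh) f` then equals `h^l/l! • V^l f` up to Taylor remainders,
so `h^l ‖V^l f‖ ≤ K (‖f‖ + h^m ‖V^m f‖)` with `K` depending only on `l` and `m`.
Taking `h = a r / K` yields the inequality with `c = K^m`.
-/

open Finset Nat Filter

lemma exists_sum_mul_pow_eq_single {K : Type*} [Field K] {n : ℕ} {v : Fin n → K}
    (hv : Function.Injective v) (l : Fin n) :
    ∃ b : Fin n → K, ∀ j : Fin n, ∑ k, b k * v k ^ (j : ℕ) = (Pi.single l 1 : Fin n → K) j := by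
  have hW : IsUnit (Matrix.vandermonde v) := by
    rw [Matrix.isUnit_iff_isUnit_det, isUnit_iff_ne_zero, Matrix.det_vandermonde_ne_zero_iff]
    exact hv
  obtain ⟨b, hb⟩ := Matrix.vecMul_surjective_iff_isUnit.2 hW (Pi.single l 1)
  exact ⟨b, fun j => by simpa [Matrix.vecMul, dotProduct] using congrFun hb j⟩

lemma hasDerivAt_orbit {E : Type*} [NormedAddCommGroup E] [NormedSpace ℝ E]
    {U : ℝ → E →L[ℝ] E} {V : E → E} (hadd : ∀ s t x, U (s + t) x = U s (U t x))
    (hderiv : ∀ x, HasDerivAt (fun t => U t x) (V x) 0) (t : ℝ) (x : E) :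
    HasDerivAt (fun s => U s x) (U t (V x)) t := by
  have hshift : (fun s => U s x) = fun s => U t (U (s - t) x) := by
    funext s
    rw [← hadd, add_sub_cancel]
  rw [hshift]
  have hinner : HasDerivAt (fun s => U (s - t) x) (V x) t :=
    HasDerivAt.comp_sub_const (f := fun s => U s x) t t (by rw [sub_self]; exact hderiv x)
  exact (U t).hasFDerivAt.comp_hasDerivAt t hinner

section Taylor

variable {E : Type*} [NormedAddCommGroup E] [NormedSpace ℝ E]

noncomputable def taylorSum (V : E → E) (n : ℕ) (x : E) (t : ℝ) : E :=
  ∑ j ∈ range n, (t ^ j / j !) • V^[j] x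

lemma taylorSum_succ_zero (V : E → E) (n : ℕ) (x : E) : taylorSum V (n + 1) x 0 = x := by
  simp [taylorSum, Finset.sum_range_succ']

lemma hasDerivAt_pow_succ_div_factorial (j : ℕ) (t : ℝ) :
    HasDerivAt (fun s : ℝ => s ^ (j + 1) / ((j + 1)! : ℝ)) (t ^ j / (j ! : ℝ)) t := by
  refine ((hasDerivAt_pow (j + 1) t).div_const ((j + 1)! : ℝ)).congr_deriv ?_
  rw [Nat.factorial_succ]; push_cast; field_simp

lemma hasDerivAt_taylorSum (V : E → E) (n : ℕ) (x : E) (t : ℝ) :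
    HasDerivAt (taylorSum V (n + 1) x) (taylorSum V n (V x) t) t := by
  have hshift : taylorSum V (n + 1) x =
      fun s : ℝ => ∑ j ∈ range n, (s ^ (j + 1) / (j + 1)!) • V^[j] (V x) + x := by
    funext s
    simp [taylorSum, Finset.sum_range_succ', Function.iterate_succ_apply]
  rw [hshift]
  exact (HasDerivAt.fun_sum fun j _ =>
    (hasDerivAt_pow_succ_div_factorial j t).smul_const _).add_const x

variable {U : ℝ → E → E} {V : E → E}

lemma norm_sub_taylorSum_le (hU0 : ∀ x, U 0 x = x)
    (hderiv : ∀ t x, HasDerivAt (fun s => U s x) (U t (V x)) t)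
    (hcontr : ∀ t x, ‖U t x‖ ≤ ‖x‖) (n : ℕ) (x : E) {T : ℝ} (hT : 0 ≤ T) :
    ‖U T x - taylorSum V n x T‖ ≤ T ^ n / n ! * ‖V^[n] x‖ := by
  induction n generalizing x T with
  | zero => simpa [taylorSum] using hcontr T x
  | succ n ih =>
    have hgderiv : ∀ t, HasDerivAt (fun s => U s x - taylorSum V (n + 1) x s)
        (U t (V x) - taylorSum V n (V x) t) t :=
      fun t => (hderiv t x).sub (hasDerivAt_taylorSum V n x t)
    refine image_norm_le_of_norm_deriv_right_le_deriv_boundary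
      (fun t _ => (hgderiv t).continuousAt.continuousWithinAt)
      (fun t _ => (hgderiv t).hasDerivWithinAt)
      (B' := fun t => t ^ n / n ! * ‖V^[n + 1] x‖) ?_
      (fun t => (hasDerivAt_pow_succ_div_factorial n t).mul_const _) ?_ ⟨hT, le_rfl⟩
    · simp [hU0, taylorSum_succ_zero]
    · intro t ht
      simpa [Function.iterate_succ_apply] using ih (V x) ht.1

lemma norm_taylorSum_le (hU0 : ∀ x, U 0 x = x)
    (hderiv : ∀ t x, HasDerivAt (fun s => U s x) (U t (V x)) t)
    (hcontr : ∀ t x, ‖U t x‖ ≤ ‖x‖) (n : ℕ) (x : E) {T : ℝ} (hT : 0 ≤ T) :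
    ‖taylorSum V n x T‖ ≤ ‖x‖ + T ^ n / n ! * ‖V^[n] x‖ :=
  calc ‖taylorSum V n x T‖ = ‖U T x - (U T x - taylorSum V n x T)‖ := by rw [sub_sub_cancel]
    _ ≤ ‖U T x‖ + ‖U T x - taylorSum V n x T‖ := norm_sub_le _ _
    _ ≤ ‖x‖ + T ^ n / n ! * ‖V^[n] x‖ :=
      add_le_add (hcontr T x) (norm_sub_taylorSum_le hU0 hderiv hcontr n x hT)

lemma sum_smul_taylorSum_eq {m : ℕ} {v b : Fin m → ℝ} {l : Fin m}
    (hb : ∀ j : Fin m, ∑ k, b k * v k ^ (j : ℕ) = (Pi.single l 1 : Fin m → ℝ) j)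
    (V : E → E) (x : E) (h : ℝ) :
    ∑ k, b k • taylorSum V m x (v k * h) = (h ^ (l : ℕ) / (l : ℕ)!) • V^[l] x := by
  calc ∑ k, b k • taylorSum V m x (v k * h)
      = ∑ j : Fin m, (∑ k, b k * v k ^ (j : ℕ)) • (h ^ (j : ℕ) / (j : ℕ)!) • V^[j] x := by
        simp only [taylorSum, ← Fin.sum_univ_eq_sum_range, Finset.smul_sum]
        rw [Finset.sum_comm]
        refine Finset.sum_congr rfl fun j _ => ?_
        rw [Finset.sum_smul]
        refine Finset.sum_congr rfl fun k _ => ?_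
        rw [smul_smul, smul_smul, mul_pow]
        ring_nf
    _ = (h ^ (l : ℕ) / (l : ℕ)!) • V^[l] x := by simp [hb]

end Taylor

/-- Stated for all large `K`, so that the finitely many `l < m` can share one constant. -/
lemma eventually_pow_mul_norm_iterate_le {l m : ℕ} (hlm : l < m) :
    ∀ᶠ K in atTop, ∀ (E : Type) [NormedAddCommGroup E] [NormedSpace ℝ E]
      (U : ℝ → E → E) (V : E → E), (∀ x, U 0 x = x) →
      (∀ t x, HasDerivAt (fun s => U s x) (U t (V x)) t) → (∀ t x, ‖U t x‖ ≤ ‖x‖) →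
      ∀ (x : E) (h : ℝ), 0 < h → h ^ l * ‖V^[l] x‖ ≤ K * (‖x‖ + h ^ m * ‖V^[m] x‖) := by
  obtain ⟨b, hb⟩ := exists_sum_mul_pow_eq_single (v := fun k : Fin m => (k : ℝ))
    (fun i j hij => Fin.val_injective (Nat.cast_injective hij)) ⟨l, hlm⟩
  refine eventually_atTop.2 ⟨l ! * (∑ k, |b k|) * m ^ m,
    fun K hK E _ _ U V hU0 hderiv hcontr x h hh => ?_⟩
  have hnode : ∀ k : Fin m,
      ‖taylorSum V m x (k * h)‖ ≤ m ^ m * (‖x‖ + h ^ m * ‖V^[m] x‖) := by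
    intro k
    have hk : (k : ℝ) ≤ m := by exact_mod_cast k.isLt.le
    have hm : (1 : ℝ) ≤ m ^ m := one_le_pow₀ (by exact_mod_cast (l.zero_le.trans_lt hlm))
    calc ‖taylorSum V m x (k * h)‖ ≤ ‖x‖ + (k * h) ^ m / m ! * ‖V^[m] x‖ :=
          norm_taylorSum_le hU0 hderiv hcontr m x (by positivity)
      _ ≤ m ^ m * ‖x‖ + (m * h) ^ m * ‖V^[m] x‖ := by
          gcongr
          · exact le_mul_of_one_le_left (norm_nonneg x) hm
          · exact (_root_.div_le_self (by positivity) (mod_cast factorial_pos m)).trans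
              (by gcongr)
      _ = m ^ m * (‖x‖ + h ^ m * ‖V^[m] x‖) := by ring
  have hcombination := sum_smul_taylorSum_eq hb V x h
  calc h ^ l * ‖V^[l] x‖ = l ! * ‖(h ^ l / l !) • V^[l] x‖ := by
        rw [norm_smul, Real.norm_of_nonneg (by positivity)]
        field_simp
    _ = l ! * ‖∑ k, b k • taylorSum V m x (k * h)‖ := by rw [hcombination]
    _ ≤ l ! * ∑ k, |b k| * (m ^ m * (‖x‖ + h ^ m * ‖V^[m] x‖)) := by
        gcongr
        refine (norm_sum_le _ _).trans (Finset.sum_le_sum fun k _ => ?_)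
        rw [norm_smul, Real.norm_eq_abs]
        gcongr
        exact hnode k
    _ = l ! * (∑ k, |b k|) * m ^ m * (‖x‖ + h ^ m * ‖V^[m] x‖) := by
        rw [← Finset.sum_mul]
        ring
    _ ≤ K * (‖x‖ + h ^ m * ‖V^[m] x‖) := by gcongr

lemma le_of_forall_pow_mul_le {l m : ℕ} (hlm : l < m) {K X Y Z : ℝ} (hK : 1 ≤ K)
    (hY : 0 ≤ Y) (hZ : 0 ≤ Z) (H : ∀ h : ℝ, 0 < h → h ^ l * X ≤ K * (Y + h ^ m * Z))
    {a r : ℝ} (ha : 0 < a) (hr : 0 < r) :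
    r ^ l * X ≤ a ^ (m - l) * r ^ m * Z + K ^ m * a ^ (-(l : ℤ)) * Y := by
  obtain ⟨d, rfl⟩ : ∃ d, m = l + 1 + d := ⟨m - l - 1, by omega⟩
  calc r ^ l * X = (K / a) ^ l * ((a * r / K) ^ l * X) := by
        rw [← mul_assoc, ← mul_pow]
        field_simp
    _ ≤ (K / a) ^ l * (K * (Y + (a * r / K) ^ (l + 1 + d) * Z)) :=
        mul_le_mul_of_nonneg_left (H _ (by positivity)) (by positivity)
    _ = K ^ (l + 1) * (a ^ l)⁻¹ * Y + a ^ (d + 1) * r ^ (l + 1 + d) * Z / K ^ d := by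
        rw [div_pow, div_pow, mul_pow]
        field_simp
        ring
    _ ≤ K ^ (l + 1 + d) * (a ^ l)⁻¹ * Y + a ^ (d + 1) * r ^ (l + 1 + d) * Z := by
        have hpow : K ^ (l + 1) ≤ K ^ (l + 1 + d) := pow_le_pow_right₀ hK (by omega)
        exact add_le_add (by gcongr) (_root_.div_le_self (by positivity) (one_le_pow₀ hK))
    _ = a ^ (l + 1 + d - l) * r ^ (l + 1 + d) * Z + K ^ (l + 1 + d) * a ^ (-(l : ℤ)) * Y := by
        rw [zpow_neg, zpow_natCast, show l + 1 + d - l = d + 1 by omega]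
        ring

theorem interpolation_inequality_general (m : ℕ) :
    ∃ c : ℝ, 0 < c ∧
      ∀ (E : Type) (_ : NormedAddCommGroup E), ∀ (_ : NormedSpace ℂ E) (_ : CompleteSpace E),
      ∀ (U : ℝ → E →L[ℂ] E) (V : E →ₗ[ℂ] E),
        U 0 = 1 →
        (∀ s t : ℝ, U (s + t) = (U s).comp (U t)) →
        (∀ (t : ℝ) (x : E), ‖U t x‖ = ‖x‖) →
        (∀ x : E, Continuous fun t : ℝ => U t x) →
        (∀ x : E, HasDerivAt (fun t : ℝ => U t x) (V x) 0) →
        ∀ (f : E) (l : ℕ), 1 ≤ l → l < m → ∀ a r : ℝ, 0 < a → 0 < r →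
          r ^ l * ‖(V ^ l) f‖ ≤ a ^ (m - l) * r ^ m * ‖(V ^ m) f‖ + c * a ^ (-(l : ℤ)) * ‖f‖ := by
  obtain ⟨K, hK1, hK⟩ := ((eventually_ge_atTop 1).and (eventually_all.2
    fun l : Fin m => eventually_pow_mul_norm_iterate_le l.isLt)).exists
  refine ⟨K ^ m, by positivity, fun E _ _ _ U V hU0 hadd hiso _ hderiv f l _ hlm a r ha hr => ?_⟩
  have horbit := hasDerivAt_orbit (U := fun t => (U t).restrictScalars ℝ)
    (fun s t x => by simp [hadd]) hderiv
  simp only [Module.End.pow_apply]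
  exact le_of_forall_pow_mul_le hlm hK1 (norm_nonneg _) (norm_nonneg _)
    (hK ⟨l, hlm⟩ E (fun t => U t) V (by simp [hU0]) horbit (fun t x => (hiso t x).le) f) ha hr

/-- Landau–Kolmogorov-type interpolation inequality: if `V` generates a strongly
continuous one-parameter group `e^{tV}` of isometries on a Banach space `E`, then for
`f ∈ Dom(V^m)`, `1 ≤ l < m`, and `a, r > 0`,
`r^l ‖V^l f‖ ≤ a^(m-l) r^m ‖V^m f‖ + c_m a^(-l) ‖f‖`, with `c_m` depending only on `m`. -/
theorem interpolation_inequality (m : ℕ) (hm : 1 ≤ m) :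
    ∃ c : ℝ, 0 < c ∧
      ∀ (E : Type) (_ : NormedAddCommGroup E), ∀ (_ : NormedSpace ℂ E) (_ : CompleteSpace E),
      ∀ (U : ℝ → E →L[ℂ] E) (V : E →ₗ[ℂ] E),
        U 0 = 1 →
        (∀ s t : ℝ, U (s + t) = (U s).comp (U t)) →
        (∀ (t : ℝ) (x : E), ‖U t x‖ = ‖x‖) →
        (∀ x : E, Continuous fun t : ℝ => U t x) →
        (∀ x : E, HasDerivAt (fun t : ℝ => U t x) (V x) 0) →
        ∀ (f : E) (l : ℕ), 1 ≤ l → l < m → ∀ a r : ℝ, 0 < a → 0 < r →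
          r ^ l * ‖(V ^ l) f‖ ≤ a ^ (m - l) * r ^ m * ‖(V ^ m) f‖ + c * a ^ (-(l : ℤ)) * ‖f‖ :=
  interpolation_inequality_general m
end

section
/- Let $A$ be a nonnegative self-adjoint operator on a Hilbert space $H$, with spectral measure $P$. A vector $f \in H$ satisfies $\|A^{s} f\| \le \Omega^{2s} \|f\|$ for all $s \in \mathbb{N}$ if and only if $f$ lies in the range of the spectral projection $P([0, \Omega^2])$. -/
/-!
With `μ_f` the scalar spectral measure of `f`, we have `‖Aˢ f‖² = ∫ x^(2s) dμ_f` and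
`‖f‖² = μ_f(ℝ)`, and `f` lies in the range of `P S` exactly when `μ_f` is concentrated on `S`.
The Bernstein inequalities bound the even moments of `μ_f` by `(Ω²)^(2s) μ_f(ℝ)`, which by
Chebyshev's inequality forces `|x| ≤ Ω²` for `μ_f`-a.e. `x`, while positivity of `A` forces
`x ≥ 0`. Conversely, a measure concentrated on `[0, Ω²]` obviously satisfies those moment bounds.
-/

open MeasureTheory

/-- `P` is the projection-valued spectral measure of the self-adjoint operator `A`:
each `P s` is an orthogonal projection, `P` is multiplicative and normalized, and for each
vector `f` the scalar measures `s ↦ ⟪P s f, f⟫` reproduce the moments `⟪Aⁿ f, f⟫`. -/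
def IsSpectralMeasureOf {H : Type*} [NormedAddCommGroup H] [InnerProductSpace ℂ H]
    [CompleteSpace H] (A : H →L[ℂ] H) (P : Set ℝ → H →L[ℂ] H) : Prop :=
  (∀ s, IsSelfAdjoint (P s)) ∧ (∀ s, IsIdempotentElem (P s)) ∧
  (∀ s t, (P s).comp (P t) = P (s ∩ t)) ∧ (P Set.univ = 1) ∧
  ∀ f : H, ∃ μ : Measure ℝ, IsFiniteMeasure μ ∧
    (∀ s : Set ℝ, MeasurableSet s → (μ s).toReal = (inner (𝕜 := ℂ) ((P s) f) f).re) ∧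
    (∀ n : ℕ, (inner (𝕜 := ℂ) ((A ^ n) f) f).re = ∫ x, x ^ n ∂μ)

open Filter Set

theorem measureReal_le_abs_eq_zero_of_integral_pow_le {μ : Measure ℝ} [IsFiniteMeasure μ]
    {K c : ℝ} (hK : 0 ≤ K) (hKc : K < c) (hint : ∀ n : ℕ, Integrable (fun x => x ^ (2 * n)) μ)
    (hbound : ∀ n : ℕ, ∫ x, x ^ (2 * n) ∂μ ≤ K ^ (2 * n) * μ.real univ) :
    μ.real {x | c ≤ |x|} = 0 := by
  have hc : 0 < c := hK.trans_lt hKc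
  set m := μ.real {x | c ≤ |x|}
  have hdecay : ∀ n : ℕ, m ≤ ((K / c) ^ 2) ^ n * μ.real univ := fun n => by
    have hsub : {x : ℝ | c ≤ |x|} ⊆ {x | c ^ (2 * n) ≤ x ^ (2 * n)} := fun x hx => by
      simpa only [mem_ofPred_eq, (even_two_mul n).pow_abs] using
        pow_le_pow_left₀ hc.le hx (2 * n)
    have hmarkov := mul_meas_ge_le_integral_of_nonneg
      (ae_of_all _ fun x => (even_two_mul n).pow_nonneg x) (hint n) (c ^ (2 * n))
    rw [← pow_mul, div_pow, div_mul_eq_mul_div, le_div_iff₀ (by positivity), mul_comm]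
    calc c ^ (2 * n) * m ≤ c ^ (2 * n) * μ.real {x | c ^ (2 * n) ≤ x ^ (2 * n)} := by
          gcongr; exact measureReal_mono hsub
      _ ≤ K ^ (2 * n) * μ.real univ := hmarkov.trans (hbound n)
  have hr : (K / c) ^ 2 < 1 := pow_lt_one₀ (by positivity) ((div_lt_one hc).2 hKc) two_ne_zero
  have hlim : Tendsto (fun n : ℕ => ((K / c) ^ 2) ^ n * μ.real univ) atTop (nhds 0) := by
    simpa using
      (tendsto_pow_atTop_nhds_zero_of_lt_one (by positivity) hr).mul_const (μ.real univ)
  exact le_antisymm (ge_of_tendsto hlim (Eventually.of_forall hdecay)) measureReal_nonneg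

theorem ae_abs_le_of_integral_pow_le {μ : Measure ℝ} [IsFiniteMeasure μ] {K : ℝ} (hK : 0 ≤ K)
    (hint : ∀ n : ℕ, Integrable (fun x => x ^ (2 * n)) μ)
    (hbound : ∀ n : ℕ, ∫ x, x ^ (2 * n) ∂μ ≤ K ^ (2 * n) * μ.real univ) :
    ∀ᵐ x ∂μ, |x| ≤ K := by
  have hlt : ∀ k : ℕ, ∀ᵐ x ∂μ, |x| < K + 1 / (k + 1) := fun k => by
    rw [ae_iff, ← measureReal_eq_zero_iff]
    simpa only [not_lt] using measureReal_le_abs_eq_zero_of_integral_pow_le hK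
      (lt_add_of_pos_right K Nat.one_div_pos_of_nat) hint hbound
  filter_upwards [ae_all_iff.2 hlt] with x hx
  refine le_of_forall_pos_lt_add fun ε hε => ?_
  obtain ⟨k, hk⟩ := exists_nat_one_div_lt hε
  linarith [hx k]

namespace IsSpectralMeasureOf

variable {H : Type*} [NormedAddCommGroup H] [InnerProductSpace ℂ H] [CompleteSpace H]
  {A : H →L[ℂ] H} {P : Set ℝ → H →L[ℂ] H}

/-- The measure `s ↦ ⟪P s f, f⟫` provided by `IsSpectralMeasureOf`. -/
noncomputable def measure (hP : IsSpectralMeasureOf A P) (f : H) : Measure ℝ :=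
  (hP.2.2.2.2 f).choose

instance (hP : IsSpectralMeasureOf A P) (f : H) : IsFiniteMeasure (hP.measure f) :=
  (hP.2.2.2.2 f).choose_spec.1

theorem isStarProjection (hP : IsSpectralMeasureOf A P) (s : Set ℝ) : IsStarProjection (P s) :=
  ⟨hP.2.1 s, hP.1 s⟩

theorem apply_apply (hP : IsSpectralMeasureOf A P) (s t : Set ℝ) (x : H) :
    P s (P t x) = P (s ∩ t) x := by
  rw [← hP.2.2.1 s t]
  rfl

theorem re_inner_apply_self (hP : IsSpectralMeasureOf A P) (s : Set ℝ) (x : H) :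
    (inner ℂ (P s x) x).re = ‖P s x‖ ^ 2 := by
  calc (inner ℂ (P s x) x).re = (inner ℂ (P s (P s x)) x).re := by
        rw [hP.apply_apply, inter_self]
    _ = (inner ℂ (P s x) (P s x)).re :=
        congrArg Complex.re ((hP.1 s).isSymmetric _ _)
    _ = ‖P s x‖ ^ 2 := inner_self_eq_norm_sq (𝕜 := ℂ) _

theorem measureReal_eq (hP : IsSpectralMeasureOf A P) {s : Set ℝ} (hs : MeasurableSet s)
    (f : H) : (hP.measure f).real s = ‖P s f‖ ^ 2 :=
  ((hP.2.2.2.2 f).choose_spec.2.1 s hs).trans (hP.re_inner_apply_self s f)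

theorem measureReal_univ (hP : IsSpectralMeasureOf A P) (f : H) :
    (hP.measure f).real univ = ‖f‖ ^ 2 := by
  rw [hP.measureReal_eq MeasurableSet.univ, hP.2.2.2.1]
  rfl

theorem integral_pow (hP : IsSpectralMeasureOf A P) (f : H) (n : ℕ) :
    ∫ x, x ^ n ∂hP.measure f = (inner ℂ ((A ^ n) f) f).re :=
  ((hP.2.2.2.2 f).choose_spec.2.2 n).symm

theorem integral_pow_two_mul (hP : IsSpectralMeasureOf A P) (hA : IsSelfAdjoint A) (f : H)
    (n : ℕ) : ∫ x, x ^ (2 * n) ∂hP.measure f = ‖(A ^ n) f‖ ^ 2 := by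
  calc ∫ x, x ^ (2 * n) ∂hP.measure f = (inner ℂ ((A ^ n) ((A ^ n) f)) f).re := by
        rw [hP.integral_pow, two_mul, pow_add]
        rfl
    _ = (inner ℂ ((A ^ n) f) ((A ^ n) f)).re :=
        congrArg Complex.re ((hA.pow n).isSymmetric _ _)
    _ = ‖(A ^ n) f‖ ^ 2 := inner_self_eq_norm_sq (𝕜 := ℂ) _

theorem norm_apply_le (hP : IsSpectralMeasureOf A P) (s : Set ℝ) (f : H) : ‖P s f‖ ≤ ‖f‖ :=
  (P s).le_of_opNorm_le ((hP.isStarProjection s).norm_le) f |>.trans_eq (one_mul _)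

theorem measure_apply_eq_restrict (hP : IsSpectralMeasureOf A P) {s : Set ℝ}
    (hs : MeasurableSet s) (f : H) : hP.measure (P s f) = (hP.measure f).restrict s := by
  ext t ht
  rw [Measure.restrict_apply ht, ← ENNReal.toReal_eq_toReal_iff' (measure_ne_top _ _)
    (measure_ne_top _ _), ← measureReal_def, ← measureReal_def, hP.measureReal_eq ht,
    hP.measureReal_eq (ht.inter hs), hP.apply_apply]

theorem integrable_pow_two_mul (hP : IsSpectralMeasureOf A P) (hA : IsSelfAdjoint A) (f : H)
    (n : ℕ) : Integrable (fun x => x ^ (2 * n)) (hP.measure f) := by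
  -- The moment identity is junk until integrability is known; the truncated moments are
  -- honest moments of `P [-M, M] f`, hence bounded by `‖Aⁿ‖² ‖f‖²`.
  have hcover : AECover (hP.measure f) atTop fun M : ℕ => Icc (-(M : ℝ)) M :=
    aecover_Icc (tendsto_neg_atTop_atBot.comp tendsto_natCast_atTop_atTop)
      tendsto_natCast_atTop_atTop
  refine hcover.integrable_of_integral_bounded_of_nonneg_ae ((‖A ^ n‖ * ‖f‖) ^ 2)
    (fun M => (continuous_pow (2 * n)).integrableOn_Icc)
    (ae_of_all _ fun x => (even_two_mul n).pow_nonneg x) (Eventually.of_forall fun M => ?_)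
  rw [← hP.measure_apply_eq_restrict measurableSet_Icc, hP.integral_pow_two_mul hA]
  gcongr
  exact (A ^ n).le_opNorm_of_le (hP.norm_apply_le _ f)

theorem ae_nonneg (hP : IsSpectralMeasureOf A P) (hA : IsSelfAdjoint A)
    (hpos : ∀ f : H, 0 ≤ (inner ℂ (A f) f).re) (f : H) : ∀ᵐ x ∂hP.measure f, 0 ≤ x := by
  have hint : Integrable (fun x : ℝ => x) (hP.measure f) :=
    ((memLp_two_iff_integrable_sq aestronglyMeasurable_id).2
      (by simpa using hP.integrable_pow_two_mul hA f 1)).integrable one_le_two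
  have hfirst : 0 ≤ ∫ x in Iio 0, x ∂hP.measure f := by
    have hmoment := hP.integral_pow (P (Iio 0) f) 1
    simp only [pow_one] at hmoment
    rw [← hP.measure_apply_eq_restrict measurableSet_Iio, hmoment]
    exact hpos _
  have hsupp : (Function.support fun x : ℝ => -x) ∩ Iio 0 = Iio 0 := by
    ext x
    simp +contextual [LT.lt.ne]
  have hneg : ¬ 0 < hP.measure f (Iio 0) := fun hpos_mass => by
    have hneg_int := (setIntegral_pos_iff_support_of_nonneg_ae (f := fun x : ℝ => -x)
      (ae_restrict_of_forall_mem measurableSet_Iio fun x hx => neg_nonneg.2 (le_of_lt hx))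
      hint.neg.integrableOn).2 (by rwa [hsupp])
    rw [integral_neg] at hneg_int
    linarith
  rw [ae_iff]
  simp only [not_le]
  exact nonpos_iff_eq_zero.1 (not_lt.1 hneg)

theorem mem_range_iff_ae_mem (hP : IsSpectralMeasureOf A P) {s : Set ℝ} (hs : MeasurableSet s)
    (f : H) : f ∈ range (P s) ↔ ∀ᵐ x ∂hP.measure f, x ∈ s := by
  have hcompl : ‖f - P s f‖ ^ 2 = (hP.measure f).real sᶜ := by
    rw [measureReal_compl hs, hP.measureReal_univ, hP.measureReal_eq hs, @norm_sub_sq ℂ,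
      inner_re_symm, ← hP.re_inner_apply_self, RCLike.re_to_complex]
    ring
  calc f ∈ range (P s) ↔ P s f = f :=
        ⟨fun ⟨g, hg⟩ => by rw [← hg, hP.apply_apply, inter_self], fun h => ⟨f, h⟩⟩
    _ ↔ (hP.measure f).real sᶜ = 0 := by
        rw [← hcompl, sq_eq_zero_iff, norm_sub_eq_zero_iff, eq_comm]
    _ ↔ ∀ᵐ x ∂hP.measure f, x ∈ s := measureReal_eq_zero_iff

end IsSpectralMeasureOf

theorem bernstein_iff_spectral_range_general {H : Type*} [NormedAddCommGroup H]
    [InnerProductSpace ℂ H] [CompleteSpace H]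
    (A : H →L[ℂ] H) (P : Set ℝ → H →L[ℂ] H)
    (hA : IsSelfAdjoint A) (hpos : ∀ f : H, 0 ≤ (inner (𝕜 := ℂ) (A f) f).re)
    (hP : IsSpectralMeasureOf A P) (Ω : ℝ) (f : H) :
    (∀ s : ℕ, ‖(A ^ s) f‖ ≤ Ω ^ (2 * s) * ‖f‖) ↔
      f ∈ Set.range (P (Set.Icc 0 (Ω ^ 2))) := by
  have hmoment : ∀ s : ℕ, ‖(A ^ s) f‖ ≤ Ω ^ (2 * s) * ‖f‖ ↔
      ∫ x, x ^ (2 * s) ∂hP.measure f ≤ (Ω ^ 2) ^ (2 * s) * (hP.measure f).real univ := by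
    intro s
    rw [hP.integral_pow_two_mul hA, hP.measureReal_univ, ← pow_le_pow_iff_left₀ (norm_nonneg _)
      (mul_nonneg ((even_two_mul s).pow_nonneg Ω) (norm_nonneg f)) two_ne_zero]
    ring_nf
  simp_rw [hmoment, hP.mem_range_iff_ae_mem measurableSet_Icc]
  constructor
  · intro hbound
    filter_upwards [hP.ae_nonneg hA hpos f, ae_abs_le_of_integral_pow_le (sq_nonneg Ω)
      (hP.integrable_pow_two_mul hA f) hbound] with x hx_nonneg hx_abs
    exact ⟨hx_nonneg, (le_abs_self x).trans hx_abs⟩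
  · intro hsupp s
    refine (Real.le_norm_self _).trans (norm_integral_le_of_norm_le_const ?_)
    filter_upwards [hsupp] with x hx
    rw [norm_pow, Real.norm_of_nonneg hx.1]
    exact pow_le_pow_left₀ hx.1 hx.2 _

/-- For a nonnegative self-adjoint operator `A` with spectral measure `P`, a vector `f`
satisfies the Bernstein inequalities `‖A^s f‖ ≤ Ω^{2s} ‖f‖` for all `s ∈ ℕ` if and only if
`f` lies in the range of the spectral projection `P([0, Ω²])`. -/
theorem bernstein_iff_spectral_range {H : Type*} [NormedAddCommGroup H]
    [InnerProductSpace ℂ H] [CompleteSpace H]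
    (A : H →L[ℂ] H) (P : Set ℝ → H →L[ℂ] H)
    (hA : IsSelfAdjoint A) (hpos : ∀ f : H, 0 ≤ (inner (𝕜 := ℂ) (A f) f).re)
    (hP : IsSpectralMeasureOf A P) (Ω : ℝ) (hΩ : 0 < Ω) (f : H) :
    (∀ s : ℕ, ‖(A ^ s) f‖ ≤ Ω ^ (2 * s) * ‖f‖) ↔
      f ∈ Set.range (P (Set.Icc 0 (Ω ^ 2))) :=
  bernstein_iff_spectral_range_general A P hA hpos hP Ω f
end

section
/- Let $A$ be a nonnegative self-adjoint operator on a Hilbert space $H$ and let $f$ be a nonzero vector in the range of $P([0, \Omega^2])$ but not in the range of $P([0, \sigma^2])$ for any $\sigma < \Omega$. Then $\lim_{k \to \infty} \|A^{k/2} f\|^{1/k} = \Omega$. -/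
/-! The spectral measure `μ(s) = ‖P s f‖²` of `f` has moments `∫ x ^ k dμ = ‖B ^ k f‖²`.
It lives on `[0, Ω²]`, and for `σ < Ω` it gives the set `(σ², Ω²]` the positive mass
`‖f - P([0, σ²]) f‖²`. Hence `(σ²) ^ k · μ((σ², Ω²]) ≤ ‖B ^ k f‖² ≤ (Ω²) ^ k ‖f‖²`, and taking
`k`-th roots squeezes `‖B ^ k f‖ ^ (2 / k)` to `Ω²`. -/

open MeasureTheory

open Filter Topology Set

lemma tendsto_rpow_one_div_natCast_atTop {d : ℝ} (hd : 0 < d) :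
    Tendsto (fun k : ℕ => d ^ (1 / (k : ℝ))) atTop (𝓝 1) := by
  simpa [Function.comp_def] using ((Real.continuousAt_const_rpow hd.ne').tendsto.comp
    tendsto_one_div_atTop_nhds_zero_nat : Tendsto _ atTop (𝓝 (d ^ (0 : ℝ))))

lemma mul_pow_rpow_one_div {d σ : ℝ} (hd : 0 ≤ d) (hσ : 0 ≤ σ) {k : ℕ} (hk : k ≠ 0) :
    (d * σ ^ k) ^ (1 / (k : ℝ)) = d ^ (1 / (k : ℝ)) * σ := by
  rw [Real.mul_rpow hd (by positivity), ← Real.rpow_natCast, ← Real.rpow_mul hσ,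
    mul_one_div_cancel (Nat.cast_ne_zero.mpr hk), Real.rpow_one]

theorem tendsto_rpow_one_div_of_geometric_bounds {g : ℕ → ℝ} {c C : ℝ} (hc : 0 < c)
    (hupper : ∀ k, g k ≤ C * c ^ k)
    (hlower : ∀ a, 0 ≤ a → a < c → ∃ d, 0 < d ∧ ∀ k, d * a ^ k ≤ g k) :
    Tendsto (fun k : ℕ => g k ^ (1 / (k : ℝ))) atTop (𝓝 c) := by
  -- The ratio `a = 0` gives `g ≥ 0` and, at `k = 0`, `C > 0`.
  obtain ⟨d₀, hd₀, hg₀⟩ := hlower 0 le_rfl hc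
  have hg : ∀ k, 0 ≤ g k := fun k => (by positivity : 0 ≤ d₀ * 0 ^ k).trans (hg₀ k)
  have hC : 0 < C := by
    have := (hg₀ 0).trans (hupper 0)
    simp only [pow_zero, mul_one] at this
    exact hd₀.trans_le this
  refine tendsto_order.2 ⟨fun a ha => ?_, fun b hb => ?_⟩
  · obtain ⟨σ, haσ, hσc⟩ := exists_between (max_lt ha hc : max a 0 < c)
    have hσ : 0 ≤ σ := (le_max_right a 0).trans haσ.le
    obtain ⟨d, hd, hgd⟩ := hlower σ hσ hσc
    have hlim : Tendsto (fun k : ℕ => d ^ (1 / (k : ℝ)) * σ) atTop (𝓝 σ) := by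
      simpa using (tendsto_rpow_one_div_natCast_atTop hd).mul_const σ
    filter_upwards [hlim.eventually (lt_mem_nhds ((le_max_left a 0).trans_lt haσ)),
      eventually_ne_atTop 0] with k hak hk
    refine hak.trans_le ?_
    rw [← mul_pow_rpow_one_div hd.le hσ hk]
    exact Real.rpow_le_rpow (by positivity) (hgd k) (by positivity)
  · have hlim : Tendsto (fun k : ℕ => C ^ (1 / (k : ℝ)) * c) atTop (𝓝 c) := by
      simpa using (tendsto_rpow_one_div_natCast_atTop hC).mul_const c
    filter_upwards [hlim.eventually (gt_mem_nhds hb), eventually_ne_atTop 0] with k hkb hk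
    refine lt_of_le_of_lt ?_ hkb
    rw [← mul_pow_rpow_one_div hC.le hc.le hk]
    exact Real.rpow_le_rpow (hg k) (hupper k) (by positivity)

section Moments

variable {μ : Measure ℝ} [IsFiniteMeasure μ] {c : ℝ}

lemma integrable_pow_of_ae_mem_Icc (hμ : ∀ᵐ x ∂μ, x ∈ Icc 0 c) (k : ℕ) :
    Integrable (fun x : ℝ => x ^ k) μ :=
  .of_bound (continuous_pow k).aestronglyMeasurable (c ^ k) <| hμ.mono fun x hx => by
    rw [Real.norm_eq_abs, abs_pow, abs_of_nonneg hx.1]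
    exact pow_le_pow_left₀ hx.1 hx.2 k

lemma integral_pow_le_of_ae_mem_Icc (hμ : ∀ᵐ x ∂μ, x ∈ Icc 0 c) (k : ℕ) :
    ∫ x, x ^ k ∂μ ≤ μ.real univ * c ^ k := by
  rw [← smul_eq_mul, ← integral_const]
  exact integral_mono_ae (integrable_pow_of_ae_mem_Icc hμ k) (integrable_const _)
    (hμ.mono fun x hx => pow_le_pow_left₀ hx.1 hx.2 k)

lemma measureReal_compl_Icc_mul_pow_le_integral_pow (hμ : ∀ᵐ x ∂μ, x ∈ Icc 0 c) {a : ℝ}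
    (ha : 0 ≤ a) (k : ℕ) : μ.real (Icc 0 a)ᶜ * a ^ k ≤ ∫ x, x ^ k ∂μ := by
  have hint := integrable_pow_of_ae_mem_Icc hμ k
  calc μ.real (Icc 0 a)ᶜ * a ^ k = ∫ _ in (Icc 0 a)ᶜ, a ^ k ∂μ := by
        rw [setIntegral_const, smul_eq_mul]
    _ ≤ ∫ x in (Icc 0 a)ᶜ, x ^ k ∂μ := by
        refine setIntegral_mono_on_ae (integrable_const _).integrableOn hint.integrableOn
          measurableSet_Icc.compl (hμ.mono fun x hx hxa => pow_le_pow_left₀ ha ?_ k)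
        by_contra! hxa'
        exact hxa ⟨hx.1, hxa'.le⟩
    _ ≤ ∫ x, x ^ k ∂μ :=
        setIntegral_le_integral hint (hμ.mono fun x hx => pow_nonneg hx.1 k)

theorem tendsto_integral_pow_rpow_one_div (hc : 0 < c) (hμ : ∀ᵐ x ∂μ, x ∈ Icc 0 c)
    (hmass : ∀ a, 0 ≤ a → a < c → 0 < μ.real (Icc 0 a)ᶜ) :
    Tendsto (fun k : ℕ => (∫ x, x ^ k ∂μ) ^ (1 / (k : ℝ))) atTop (𝓝 c) :=
  tendsto_rpow_one_div_of_geometric_bounds hc (integral_pow_le_of_ae_mem_Icc hμ)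
    fun a ha hac => ⟨_, hmass a ha hac, measureReal_compl_Icc_mul_pow_le_integral_pow hμ ha⟩

end Moments

section Projections

variable {H : Type*} [NormedAddCommGroup H] [InnerProductSpace ℂ H] [CompleteSpace H]

lemma re_inner_apply_self_eq_norm_sq_of_isIdempotentElem {p : H →L[ℂ] H}
    (hsa : IsSelfAdjoint p) (hid : IsIdempotentElem p) (x : H) :
    (inner ℂ (p x) x).re = ‖p x‖ ^ 2 := by
  have hpp : p (p x) = p x := congrArg (fun q : H →L[ℂ] H => q x) hid
  calc (inner ℂ (p x) x).re = (inner ℂ (p (p x)) x).re := by rw [hpp]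
    _ = (inner ℂ (p x) (p x)).re := congrArg Complex.re (hsa.isSymmetric (p x) x)
    _ = ‖p x‖ ^ 2 := inner_self_eq_norm_sq (𝕜 := ℂ) (p x)

lemma norm_sub_apply_sq_of_isIdempotentElem {p : H →L[ℂ] H}
    (hsa : IsSelfAdjoint p) (hid : IsIdempotentElem p) (x : H) :
    ‖x - p x‖ ^ 2 = ‖x‖ ^ 2 - ‖p x‖ ^ 2 := by
  rw [norm_sub_sq (𝕜 := ℂ), ← inner_conj_symm, RCLike.conj_re]
  rw [show RCLike.re (inner ℂ (p x) x) = ‖p x‖ ^ 2 from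
    re_inner_apply_self_eq_norm_sq_of_isIdempotentElem hsa hid x]
  ring

lemma measureReal_compl_eq_norm_sub_sq {α : Type*} [MeasurableSpace α] {μ : Measure α}
    [IsFiniteMeasure μ] {P : Set α → H →L[ℂ] H} {f : H}
    (hμ : ∀ s, MeasurableSet s → (μ s).toReal = (inner ℂ (P s f) f).re) (huniv : P univ = 1)
    {s : Set α} (hs : MeasurableSet s) (hsa : IsSelfAdjoint (P s))
    (hid : IsIdempotentElem (P s)) :
    μ.real sᶜ = ‖f - P s f‖ ^ 2 := by
  have hf : (inner ℂ f f).re = ‖f‖ ^ 2 := inner_self_eq_norm_sq (𝕜 := ℂ) f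
  rw [measureReal_compl hs, measureReal_def, measureReal_def, hμ s hs, hμ univ .univ, huniv,
    one_apply_eq_self, hf, re_inner_apply_self_eq_norm_sq_of_isIdempotentElem hsa hid,
    norm_sub_apply_sq_of_isIdempotentElem hsa hid]

lemma IsSelfAdjoint.norm_pow_apply_sq {T : H →L[ℂ] H} (hT : IsSelfAdjoint T)
    (k : ℕ) (x : H) : ‖(T ^ k) x‖ ^ 2 = (inner ℂ (((T ^ 2) ^ k) x) x).re := by
  rw [ContinuousLinearMap.apply_norm_sq_eq_inner_adjoint_left, (hT.pow k).adjoint_eq, ← pow_mul,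
    mul_comm, pow_mul, sq]
  rfl

end Projections

theorem norm_pow_root_tendsto_general {H : Type*} [NormedAddCommGroup H]
    [InnerProductSpace ℂ H] [CompleteSpace H]
    (A B : H →L[ℂ] H) (P : Set ℝ → H →L[ℂ] H)
    (hP : IsSpectralMeasureOf A P)
    (hB : IsSelfAdjoint B)
    (hBA : B ^ 2 = A)
    (Ω : ℝ) (hΩ : 0 < Ω) (f : H)
    (hfΩ : P (Set.Icc 0 (Ω ^ 2)) f = f)
    (hmin : ∀ σ : ℝ, 0 ≤ σ → σ < Ω → P (Set.Icc 0 (σ ^ 2)) f ≠ f) :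
    Filter.Tendsto (fun k : ℕ => ‖(B ^ k) f‖ ^ (1 / (k : ℝ)))
      Filter.atTop (nhds Ω) := by
  obtain ⟨hPsa, hPid, -, hPuniv, hPμ⟩ := hP
  obtain ⟨μ, _, hμP, hμA⟩ := hPμ f
  have hcompl (s : Set ℝ) (hs : MeasurableSet s) : μ.real sᶜ = ‖f - P s f‖ ^ 2 :=
    measureReal_compl_eq_norm_sub_sq hμP hPuniv hs (hPsa s) (hPid s)
  have hsupp : ∀ᵐ x ∂μ, x ∈ Icc 0 (Ω ^ 2) := by
    have hnull : μ.real (Icc 0 (Ω ^ 2))ᶜ = 0 := by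
      rw [hcompl _ measurableSet_Icc, hfΩ, sub_self, norm_zero, sq, mul_zero]
    exact mem_ae_iff.2 ((measureReal_eq_zero_iff).1 hnull)
  have hmass (a : ℝ) (ha : 0 ≤ a) (haΩ : a < Ω ^ 2) : 0 < μ.real (Icc 0 a)ᶜ := by
    have hPa := hmin √a (Real.sqrt_nonneg a) ((Real.sqrt_lt' hΩ).2 haΩ)
    rw [Real.sq_sqrt ha] at hPa
    rw [hcompl _ measurableSet_Icc]
    exact pow_pos (norm_pos_iff.2 (sub_ne_zero.2 hPa.symm)) 2
  have hmoment (k : ℕ) : ‖(B ^ k) f‖ ^ 2 = ∫ x, x ^ k ∂μ := by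
    rw [hB.norm_pow_apply_sq, hBA, hμA]
  have hlim := (Real.continuous_sqrt.tendsto _).comp
    (tendsto_integral_pow_rpow_one_div (by positivity) hsupp hmass)
  rw [Real.sqrt_sq hΩ.le] at hlim
  refine hlim.congr fun k => ?_
  rw [Function.comp_apply, ← hmoment, ← Real.rpow_pow_comm (norm_nonneg _),
    Real.sqrt_sq (by positivity)]

/-- If `f ≠ 0` lies in the range of `P([0, Ω²])` but not in the range of `P([0, σ²])`
for any `σ < Ω`, then `lim_{k→∞} ‖A^{k/2} f‖^{1/k} = Ω`, where `A^{1/2} = B` is the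
nonnegative self-adjoint square root of `A`. -/
theorem norm_pow_root_tendsto {H : Type*} [NormedAddCommGroup H]
    [InnerProductSpace ℂ H] [CompleteSpace H]
    (A B : H →L[ℂ] H) (P : Set ℝ → H →L[ℂ] H)
    (hA : IsSelfAdjoint A) (hpos : ∀ f : H, 0 ≤ (inner (𝕜 := ℂ) (A f) f).re)
    (hP : IsSpectralMeasureOf A P)
    (hB : IsSelfAdjoint B) (hBpos : ∀ f : H, 0 ≤ (inner (𝕜 := ℂ) (B f) f).re)
    (hBA : B ^ 2 = A)
    (Ω : ℝ) (hΩ : 0 < Ω) (f : H) (hf0 : f ≠ 0)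
    (hfΩ : P (Set.Icc 0 (Ω ^ 2)) f = f)
    (hmin : ∀ σ : ℝ, 0 ≤ σ → σ < Ω → P (Set.Icc 0 (σ ^ 2)) f ≠ f) :
    Filter.Tendsto (fun k : ℕ => ‖(B ^ k) f‖ ^ (1 / (k : ℝ)))
      Filter.atTop (nhds Ω) :=
  norm_pow_root_tendsto_general A B P hP hB hBA Ω hΩ f hfΩ hmin
end

section
/- Let $A$ and $L$ be commuting nonnegative self-adjoint operators on a Hilbert space $H$ with $\|A f\| \le B(\|f\| + \|L f\|)$ for all $f$ in a common core, for some constant $B > 0$. Then for every $k \in \mathbb{N}$ and every $f$ in the domain of all relevant powers, $\|A^k f\| \le (2B)^k \sum_{0 \le l \le k} \|L^l f\|$. -/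
/-! Induction on `k`: since `A` commutes with every power of `L`, applying the bound for `k` to
`A f` and then the one-step comparison to each `L^l f` gives
`‖A^(k+1) f‖ ≤ (2B)^k B ∑_{l ≤ k} (‖L^l f‖ + ‖L^(l+1) f‖)`, and each `‖L^l f‖` occurs at most
twice in the last sum. -/

open Finset

theorem sum_range_add_succ_le_two_mul {a : ℕ → ℝ} (ha : ∀ l, 0 ≤ a l) (n : ℕ) :
    ∑ l ∈ range n, (a l + a (l + 1)) ≤ 2 * ∑ l ∈ range (n + 1), a l := by
  rw [sum_add_distrib, two_mul]
  nth_rw 1 [sum_range_succ a n]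
  rw [sum_range_succ' a n]
  linarith [ha n, ha 0]

namespace ContinuousLinearMap

variable {R E : Type*} [Semiring R] [SeminormedAddCommGroup E] [Module R E]

theorem sum_norm_pow_apply_le_of_commute {A L : E →L[R] E} (hcomm : Commute A L) {B : ℝ}
    (hAL : ∀ f, ‖A f‖ ≤ B * (‖f‖ + ‖L f‖)) (n : ℕ) (f : E) :
    ∑ l ∈ range n, ‖(L ^ l) (A f)‖ ≤ B * ∑ l ∈ range n, (‖(L ^ l) f‖ + ‖(L ^ (l + 1)) f‖) := by
  rw [mul_sum]
  refine sum_le_sum fun l _ => ?_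
  have hLA : (L ^ l) (A f) = A ((L ^ l) f) := congr($((hcomm.pow_right l).symm) f)
  rw [hLA, pow_succ', mul_apply_eq_comp]
  exact hAL _

theorem norm_pow_apply_le_of_commute {A L : E →L[R] E} (hcomm : Commute A L) {B : ℝ}
    (hB : 0 ≤ B) (hAL : ∀ f, ‖A f‖ ≤ B * (‖f‖ + ‖L f‖)) (k : ℕ) (f : E) :
    ‖(A ^ k) f‖ ≤ (2 * B) ^ k * ∑ l ∈ range (k + 1), ‖(L ^ l) f‖ := by
  induction k generalizing f with
  | zero => simp
  | succ k ih =>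
    calc ‖(A ^ (k + 1)) f‖ = ‖(A ^ k) (A f)‖ := by rw [pow_succ, mul_apply_eq_comp]
      _ ≤ (2 * B) ^ k * ∑ l ∈ range (k + 1), ‖(L ^ l) (A f)‖ := ih (A f)
      _ ≤ (2 * B) ^ k * (B * ∑ l ∈ range (k + 1), (‖(L ^ l) f‖ + ‖(L ^ (l + 1)) f‖)) := by
        gcongr
        exact sum_norm_pow_apply_le_of_commute hcomm hAL _ f
      _ ≤ (2 * B) ^ k * (B * (2 * ∑ l ∈ range (k + 2), ‖(L ^ l) f‖)) := by
        gcongr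
        exact sum_range_add_succ_le_two_mul (fun l => norm_nonneg _) _
      _ = (2 * B) ^ (k + 1) * ∑ l ∈ range (k + 2), ‖(L ^ l) f‖ := by ring

end ContinuousLinearMap

theorem iterate_comparison_general {H : Type*} [NormedAddCommGroup H] [InnerProductSpace ℂ H]
    (A L : H →L[ℂ] H)
    (hcomm : Commute A L)
    (B : ℝ) (hB : 0 < B) (hAL : ∀ f : H, ‖A f‖ ≤ B * (‖f‖ + ‖L f‖))
    (k : ℕ) (f : H) :
    ‖(A ^ k) f‖ ≤ (2 * B) ^ k * ∑ l ∈ Finset.range (k + 1), ‖(L ^ l) f‖ :=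
  ContinuousLinearMap.norm_pow_apply_le_of_commute hcomm hB.le hAL k f

/-- Iteration of a one-step comparison between commuting nonnegative self-adjoint
operators: if `‖A f‖ ≤ B(‖f‖ + ‖L f‖)` for all `f`, then
`‖A^k f‖ ≤ (2B)^k ∑_{0 ≤ l ≤ k} ‖L^l f‖`. -/
theorem iterate_comparison {H : Type*} [NormedAddCommGroup H] [InnerProductSpace ℂ H]
    [CompleteSpace H] (A L : H →L[ℂ] H)
    (hA : IsSelfAdjoint A) (hL : IsSelfAdjoint L)
    (hApos : ∀ f : H, 0 ≤ (inner (𝕜 := ℂ) (A f) f).re)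
    (hLpos : ∀ f : H, 0 ≤ (inner (𝕜 := ℂ) (L f) f).re)
    (hcomm : Commute A L)
    (B : ℝ) (hB : 0 < B) (hAL : ∀ f : H, ‖A f‖ ≤ B * (‖f‖ + ‖L f‖))
    (k : ℕ) (f : H) :
    ‖(A ^ k) f‖ ≤ (2 * B) ^ k * ∑ l ∈ Finset.range (k + 1), ‖(L ^ l) f‖ :=
  iterate_comparison_general A L hcomm B hB hAL k f
end
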